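/- arXiv:2603.12405 — 2 statements merged into one kernel-verified Lean document; each statement's English description precedes it below -/
import Mathlib

section
/- The matrix U_p is unitary and satisfies (⟨0|⊗⟨0|⊗I_N) U_p (|0⟩⊗|0⟩⊗I_N) = L̃_p; that is, U_p is an exact (1, 2, 0)-block encoding of the scaled one-dimensional periodic Laplacian L̃_p. -/
open Matrix
open scoped Kronecker

noncomputable section

instance instNeZeroPow2 (n : ℕ) : NeZero (2 ^ n) := ⟨pow_ne_zero n two_ne_zero⟩

/-- Cyclic left shift: `Sm • e_j = e_{j-1 mod N}`, i.e. `(Sm)_{i j} = [i = j - 1]`. -/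
def Sm (N : ℕ) [NeZero N] : Matrix (Fin N) (Fin N) ℂ :=
  Matrix.of fun i j => if i = j - 1 then 1 else 0

/-- Cyclic right shift: `Sp • e_j = e_{j+1 mod N}`. -/
def Sp (N : ℕ) [NeZero N] : Matrix (Fin N) (Fin N) ℂ :=
  Matrix.of fun i j => if i = j + 1 then 1 else 0

/-- The scaled 1D periodic Laplacian `L̃_p = (1/4)(S⁻ + S⁺ − 2 I)`. -/
def Lper (N : ℕ) [NeZero N] : Matrix (Fin N) (Fin N) ℂ :=
  (1 / 4 : ℂ) • (Sm N + Sp N - (2 : ℂ) • (1 : Matrix (Fin N) (Fin N) ℂ))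

def Hgate : Matrix (Fin 2) (Fin 2) ℂ := ((1 / Real.sqrt 2 : ℝ) : ℂ) • !![1, 1; 1, -1]
def Zgate : Matrix (Fin 2) (Fin 2) ℂ := !![1, 0; 0, -1]
def P0 : Matrix (Fin 2) (Fin 2) ℂ := !![1, 0; 0, 0]
def P1 : Matrix (Fin 2) (Fin 2) ℂ := !![0, 0; 0, 1]

/-- `C₋ = |0⟩⟨0| ⊗ I₂ ⊗ S⁻ + |1⟩⟨1| ⊗ I₂ ⊗ I_N`. -/
def Cminus (N : ℕ) [NeZero N] : Matrix (Fin 2 × Fin 2 × Fin N) (Fin 2 × Fin 2 × Fin N) ℂ :=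
  P0 ⊗ₖ ((1 : Matrix (Fin 2) (Fin 2) ℂ) ⊗ₖ Sm N) +
  P1 ⊗ₖ ((1 : Matrix (Fin 2) (Fin 2) ℂ) ⊗ₖ (1 : Matrix (Fin N) (Fin N) ℂ))

/-- `C₊ = I₂ ⊗ |1⟩⟨1| ⊗ S⁺ + I₂ ⊗ |0⟩⟨0| ⊗ I_N`. -/
def Cplus (N : ℕ) [NeZero N] : Matrix (Fin 2 × Fin 2 × Fin N) (Fin 2 × Fin 2 × Fin N) ℂ :=
  (1 : Matrix (Fin 2) (Fin 2) ℂ) ⊗ₖ (P1 ⊗ₖ Sp N) +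
  (1 : Matrix (Fin 2) (Fin 2) ℂ) ⊗ₖ (P0 ⊗ₖ (1 : Matrix (Fin N) (Fin N) ℂ))

/-- `U_p = (H⊗H⊗I) · C₊ · C₋ · (Z⊗Z⊗I) · (H⊗H⊗I)`. -/
def Up (N : ℕ) [NeZero N] : Matrix (Fin 2 × Fin 2 × Fin N) (Fin 2 × Fin 2 × Fin N) ℂ :=
  (Hgate ⊗ₖ (Hgate ⊗ₖ (1 : Matrix (Fin N) (Fin N) ℂ))) * Cplus N * Cminus N *
    (Zgate ⊗ₖ (Zgate ⊗ₖ (1 : Matrix (Fin N) (Fin N) ℂ))) *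
    (Hgate ⊗ₖ (Hgate ⊗ₖ (1 : Matrix (Fin N) (Fin N) ℂ)))

-- small 2x2 facts
lemma hc : ((1 / Real.sqrt 2 : ℝ) : ℂ) * ((1 / Real.sqrt 2 : ℝ) : ℂ) = 1 / 2 := by
  rw [← Complex.ofReal_mul]
  have : (1 / Real.sqrt 2) * (1 / Real.sqrt 2) = 1 / 2 := by
    rw [div_mul_div_comm, one_mul, Real.mul_self_sqrt (by norm_num)]
  rw [this]
  norm_num

lemma Hraw_mul : !![(1:ℂ),1;1,-1] * !![(1:ℂ),1;1,-1] = (2:ℂ) • 1 := by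
  ext i j
  fin_cases i <;> fin_cases j <;>
    simp [Matrix.mul_apply, Fin.sum_univ_two, Matrix.one_apply] <;> norm_num

lemma Hgate_conjT : Hgateᴴ = Hgate := by
  ext i j
  fin_cases i <;> fin_cases j <;> simp [Hgate, conjTranspose_apply]

lemma Hgate_mul : Hgate * Hgate = 1 := by
  rw [Hgate, smul_mul_smul_comm, Hraw_mul, hc, smul_smul]
  norm_num

lemma Zgate_conjT : Zgateᴴ = Zgate := by
  ext i j
  fin_cases i <;> fin_cases j <;> simp [Zgate, conjTranspose_apply]

lemma Zgate_mul : Zgate * Zgate = 1 := by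
  ext i j
  fin_cases i <;> fin_cases j <;>
    simp [Zgate, Matrix.mul_apply, Fin.sum_univ_two, Matrix.one_apply]

lemma P0_conjT : P0ᴴ = P0 := by
  ext i j; fin_cases i <;> fin_cases j <;> simp [P0, conjTranspose_apply]
lemma P1_conjT : P1ᴴ = P1 := by
  ext i j; fin_cases i <;> fin_cases j <;> simp [P1, conjTranspose_apply]
lemma P0_mul_P0 : P0 * P0 = P0 := by
  ext i j; fin_cases i <;> fin_cases j <;> simp [P0, Matrix.mul_apply, Fin.sum_univ_two]
lemma P1_mul_P1 : P1 * P1 = P1 := by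
  ext i j; fin_cases i <;> fin_cases j <;> simp [P1, Matrix.mul_apply, Fin.sum_univ_two]
lemma P0_mul_P1 : P0 * P1 = 0 := by
  ext i j; fin_cases i <;> fin_cases j <;> simp [P0, P1, Matrix.mul_apply, Fin.sum_univ_two]
lemma P1_mul_P0 : P1 * P0 = 0 := by
  ext i j; fin_cases i <;> fin_cases j <;> simp [P0, P1, Matrix.mul_apply, Fin.sum_univ_two]
lemma P0_add_P1 : P0 + P1 = 1 := by
  ext i j; fin_cases i <;> fin_cases j <;> simp [P0, P1, Matrix.one_apply]

lemma hZH : Zgate * Hgate = ((1 / Real.sqrt 2 : ℝ) : ℂ) • !![(1:ℂ),1;-1,1] := by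
  rw [Hgate, Matrix.mul_smul]
  congr 1
  ext i j
  fin_cases i <;> fin_cases j <;> simp [Zgate, Matrix.mul_apply, Fin.sum_univ_two]

lemma hHP0 : Hgate * P0 * (Zgate * Hgate) = (1/2 : ℂ) • !![(1:ℂ),1;1,1] := by
  rw [hZH, Hgate, Matrix.smul_mul, Matrix.smul_mul, Matrix.mul_smul, smul_smul, hc]
  congr 1
  ext i j
  fin_cases i <;> fin_cases j <;> simp [P0, Matrix.mul_apply, Fin.sum_univ_two]

lemma hHP1 : Hgate * P1 * (Zgate * Hgate) = (1/2 : ℂ) • !![(-1:ℂ),1;1,-1] := by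
  rw [hZH, Hgate, Matrix.smul_mul, Matrix.smul_mul, Matrix.mul_smul, smul_smul, hc]
  congr 1
  ext i j
  fin_cases i <;> fin_cases j <;> simp [P1, Matrix.mul_apply, Fin.sum_univ_two]

lemma kron_conjT {l m p q : Type*} (A : Matrix l m ℂ) (B : Matrix p q ℂ) :
    (A ⊗ₖ B)ᴴ = Aᴴ ⊗ₖ Bᴴ := by
  ext ⟨i1, i2⟩ ⟨j1, j2⟩
  simp [conjTranspose_apply, kroneckerMap_apply, mul_comm]

-- earlier shift lemmas (restated here)
lemma Sp_mul_Sm (N : ℕ) [NeZero N] : Sp N * Sm N = 1 := by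
  ext i k
  simp only [Sp, Sm, mul_apply, of_apply, one_apply, ite_mul, one_mul, zero_mul]
  rw [Finset.sum_eq_single (k - 1)]
  · simp [sub_add_cancel]
  · intro j _ hj; simp [hj]
  · simp

lemma Sm_mul_Sp (N : ℕ) [NeZero N] : Sm N * Sp N = 1 := by
  ext i k
  simp only [Sm, Sp, mul_apply, of_apply, one_apply, ite_mul, one_mul, zero_mul]
  rw [Finset.sum_eq_single (k + 1)]
  · simp [add_sub_cancel_right]
  · intro j _ hj; simp [hj]
  · simp

lemma Sm_conjT (N : ℕ) [NeZero N] : (Sm N)ᴴ = Sp N := by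
  ext i j
  simp only [Sm, Sp, conjTranspose_apply, of_apply]
  by_cases h : i = j + 1
  · have hj : j = i - 1 := by rw [h]; simp
    rw [if_pos hj, if_pos h]; simp
  · have hj : j ≠ i - 1 := fun hh => h (by rw [hh]; simp [sub_add_cancel])
    rw [if_neg hj, if_neg h]; simp

lemma Sp_conjT (N : ℕ) [NeZero N] : (Sp N)ᴴ = Sm N := by
  rw [← Sm_conjT, conjTranspose_conjTranspose]

-- unitarity of kronecker products
lemma kron_unitary {m p : Type*} [Fintype m] [DecidableEq m] [Fintype p] [DecidableEq p]
    {A : Matrix m m ℂ} {B : Matrix p p ℂ}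
    (hA : A ∈ Matrix.unitaryGroup m ℂ) (hB : B ∈ Matrix.unitaryGroup p ℂ) :
    A ⊗ₖ B ∈ Matrix.unitaryGroup (m × p) ℂ := by
  rw [Matrix.mem_unitaryGroup_iff'] at hA hB ⊢
  rw [Matrix.star_eq_conjTranspose] at hA hB ⊢
  rw [kron_conjT, ← Matrix.mul_kronecker_mul, hA, hB, Matrix.one_kronecker_one]

lemma Hgate_unitary : Hgate ∈ Matrix.unitaryGroup (Fin 2) ℂ := by
  rw [Matrix.mem_unitaryGroup_iff', Matrix.star_eq_conjTranspose, Hgate_conjT, Hgate_mul]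

lemma Zgate_unitary : Zgate ∈ Matrix.unitaryGroup (Fin 2) ℂ := by
  rw [Matrix.mem_unitaryGroup_iff', Matrix.star_eq_conjTranspose, Zgate_conjT, Zgate_mul]

lemma Cminus_unitary (N : ℕ) [NeZero N] :
    Cminus N ∈ Matrix.unitaryGroup (Fin 2 × Fin 2 × Fin N) ℂ := by
  rw [Matrix.mem_unitaryGroup_iff', Matrix.star_eq_conjTranspose, Cminus,
    conjTranspose_add, kron_conjT, kron_conjT, kron_conjT, kron_conjT,
    P0_conjT, P1_conjT, conjTranspose_one, conjTranspose_one, Sm_conjT]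
  simp only [add_mul, mul_add, ← Matrix.mul_kronecker_mul, P0_mul_P0, P0_mul_P1,
    P1_mul_P0, P1_mul_P1, Matrix.one_mul, Matrix.mul_one, Sp_mul_Sm, Sm_mul_Sp,
    Matrix.zero_kronecker, Matrix.kronecker_zero, add_zero, zero_add]
  rw [← Matrix.add_kronecker, P0_add_P1, Matrix.one_kronecker_one, Matrix.one_kronecker_one]

lemma Cplus_unitary (N : ℕ) [NeZero N] :
    Cplus N ∈ Matrix.unitaryGroup (Fin 2 × Fin 2 × Fin N) ℂ := by
  rw [Matrix.mem_unitaryGroup_iff', Matrix.star_eq_conjTranspose, Cplus,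
    conjTranspose_add, kron_conjT, kron_conjT, kron_conjT, kron_conjT,
    P0_conjT, P1_conjT, conjTranspose_one, conjTranspose_one, Sp_conjT]
  simp only [add_mul, mul_add, ← Matrix.mul_kronecker_mul, P0_mul_P0, P0_mul_P1,
    P1_mul_P0, P1_mul_P1, Matrix.one_mul, Matrix.mul_one, Sp_mul_Sm, Sm_mul_Sp,
    Matrix.zero_kronecker, Matrix.kronecker_zero, add_zero, zero_add]
  rw [← Matrix.kronecker_add, ← Matrix.add_kronecker, add_comm P1 P0, P0_add_P1, Matrix.one_kronecker_one,
    Matrix.one_kronecker_one]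

lemma key (N : ℕ) [NeZero N] (X Y QX QY : Matrix (Fin 2) (Fin 2) ℂ)
    (W : Matrix (Fin N) (Fin N) ℂ)
    (hX : Hgate * X * (Zgate * Hgate) = (1/2 : ℂ) • QX)
    (hY : Hgate * Y * (Zgate * Hgate) = (1/2 : ℂ) • QY) :
    (Hgate ⊗ₖ (Hgate ⊗ₖ (1 : Matrix (Fin N) (Fin N) ℂ))) * (X ⊗ₖ (Y ⊗ₖ W)) *
      ((Zgate * Hgate) ⊗ₖ ((Zgate * Hgate) ⊗ₖ (1 : Matrix (Fin N) (Fin N) ℂ))) =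
    (1/4 : ℂ) • (QX ⊗ₖ (QY ⊗ₖ W)) := by
  simp only [← Matrix.mul_kronecker_mul, Matrix.one_mul, Matrix.mul_one]
  rw [hX, hY, Matrix.smul_kronecker, Matrix.smul_kronecker, Matrix.kronecker_smul, smul_smul]
  norm_num

lemma hM (N : ℕ) [NeZero N] : Cplus N * Cminus N =
    P0 ⊗ₖ (P1 ⊗ₖ (1 : Matrix (Fin N) (Fin N) ℂ)) + P1 ⊗ₖ (P1 ⊗ₖ Sp N) +
    P0 ⊗ₖ (P0 ⊗ₖ Sm N) + P1 ⊗ₖ (P0 ⊗ₖ (1 : Matrix (Fin N) (Fin N) ℂ)) := by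
  unfold Cplus Cminus
  simp only [add_mul, mul_add, ← Matrix.mul_kronecker_mul, Matrix.one_mul, Matrix.mul_one,
    Sp_mul_Sm]
  abel

lemma hBA (N : ℕ) [NeZero N] :
    (Zgate ⊗ₖ (Zgate ⊗ₖ (1 : Matrix (Fin N) (Fin N) ℂ))) *
      (Hgate ⊗ₖ (Hgate ⊗ₖ (1 : Matrix (Fin N) (Fin N) ℂ))) =
    (Zgate * Hgate) ⊗ₖ ((Zgate * Hgate) ⊗ₖ (1 : Matrix (Fin N) (Fin N) ℂ)) := by
  rw [← Matrix.mul_kronecker_mul, ← Matrix.mul_kronecker_mul, Matrix.one_mul]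

lemma Up_eq (N : ℕ) [NeZero N] : Up N = (1/4 : ℂ) •
    (!![(1:ℂ),1;1,1] ⊗ₖ (!![(-1:ℂ),1;1,-1] ⊗ₖ (1 : Matrix (Fin N) (Fin N) ℂ))
     + !![(-1:ℂ),1;1,-1] ⊗ₖ (!![(-1:ℂ),1;1,-1] ⊗ₖ Sp N)
     + !![(1:ℂ),1;1,1] ⊗ₖ (!![(1:ℂ),1;1,1] ⊗ₖ Sm N)
     + !![(-1:ℂ),1;1,-1] ⊗ₖ (!![(1:ℂ),1;1,1] ⊗ₖ (1 : Matrix (Fin N) (Fin N) ℂ))) := by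
  have h1 : Up N = (Hgate ⊗ₖ (Hgate ⊗ₖ (1 : Matrix (Fin N) (Fin N) ℂ))) *
      (Cplus N * Cminus N) *
      ((Zgate ⊗ₖ (Zgate ⊗ₖ (1 : Matrix (Fin N) (Fin N) ℂ))) *
        (Hgate ⊗ₖ (Hgate ⊗ₖ (1 : Matrix (Fin N) (Fin N) ℂ)))) := by
    unfold Up; simp only [mul_assoc]
  rw [h1, hM, hBA]
  simp only [Matrix.mul_add, Matrix.add_mul]
  rw [key N P0 P1 !![(1:ℂ),1;1,1] !![(-1:ℂ),1;1,-1] _ hHP0 hHP1,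
    key N P1 P1 !![(-1:ℂ),1;1,-1] !![(-1:ℂ),1;1,-1] _ hHP1 hHP1,
    key N P0 P0 !![(1:ℂ),1;1,1] !![(1:ℂ),1;1,1] _ hHP0 hHP0,
    key N P1 P0 !![(-1:ℂ),1;1,-1] !![(1:ℂ),1;1,1] _ hHP1 hHP0]
  simp only [smul_add]


/-- `U_p` is unitary and is an exact (1,2,0)-block encoding of the scaled 1D periodic
Laplacian: `(⟨0|⊗⟨0|⊗I) U_p (|0⟩⊗|0⟩⊗I) = L̃_p`. -/
theorem up_block_encodes_periodic_laplacian (n : ℕ) (hn : 1 ≤ n) :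
    Up (2 ^ n) ∈ Matrix.unitaryGroup (Fin 2 × Fin 2 × Fin (2 ^ n)) ℂ ∧
    (Up (2 ^ n)).submatrix
        (fun i : Fin (2 ^ n) => ((0 : Fin 2), (0 : Fin 2), i))
        (fun j : Fin (2 ^ n) => ((0 : Fin 2), (0 : Fin 2), j))
      = Lper (2 ^ n) := by
  constructor
  · have hA : Hgate ⊗ₖ (Hgate ⊗ₖ (1 : Matrix (Fin (2^n)) (Fin (2^n)) ℂ)) ∈
        Matrix.unitaryGroup (Fin 2 × Fin 2 × Fin (2^n)) ℂ :=
      kron_unitary Hgate_unitary (kron_unitary Hgate_unitary (one_mem _))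
    have hB : Zgate ⊗ₖ (Zgate ⊗ₖ (1 : Matrix (Fin (2^n)) (Fin (2^n)) ℂ)) ∈
        Matrix.unitaryGroup (Fin 2 × Fin 2 × Fin (2^n)) ℂ :=
      kron_unitary Zgate_unitary (kron_unitary Zgate_unitary (one_mem _))
    exact mul_mem (mul_mem (mul_mem (mul_mem hA (Cplus_unitary _)) (Cminus_unitary _)) hB) hA
  · rw [Up_eq]
    ext i j
    simp only [Matrix.submatrix_apply, Matrix.smul_apply, Matrix.add_apply,
      kroneckerMap_apply, Lper, Sm, Sp, Matrix.sub_apply, Matrix.one_apply,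
      Matrix.of_apply, smul_eq_mul, Matrix.cons_val', Matrix.cons_val_zero,
      Matrix.empty_val', Matrix.cons_val_fin_one, Matrix.cons_val_one, Matrix.head_cons]
    split <;> ring
end
end

section
/- Let D ≥ 1 and for each d = 1, …, D let n_d ≥ 1, N_d = 2^{n_d}, h_d > 0, and let L̃^{(N_d)}_{b_d} be the scaled one-dimensional Laplacian of size N_d with boundary condition b_d ∈ {periodic, Dirichlet, Neumann}. Set ω_d = (1/h_d²)/(Σ_{i=1}^D 1/h_i²), M = N_D N_{D−1} ⋯ N_1, and define the scaled D-dimensional Laplacian L̃^{(D)} = Σ_{d=1}^D (I_{N_D} ⊗ ⋯ ⊗ I_{N_{d+1}}) ⊗ ω_d L̃^{(N_d)}_{b_d} ⊗ (I_{N_{d−1}} ⊗ ⋯ ⊗ I_{N_1}). Suppose for each d that V_d is a unitary on ℂ^{2^3} ⊗ ℂ^M that is a (1, 3, 0)-block encoding of (I_{N_D} ⊗ ⋯ ⊗ I_{N_{d+1}}) ⊗ L̃^{(N_d)}_{b_d} ⊗ (I_{N_{d−1}} ⊗ ⋯ ⊗ I_{N_1}). Let K = 2^{⌈log₂ D⌉}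 with standard basis f_1, …, f_K of ℂ^K, let W be any K×K unitary with W f_1 = Σ_{d=1}^D √ω_d f_d, and define SEL = Σ_{d=1}^D f_d f_d^* ⊗ V_d + Σ_{d=D+1}^K f_d f_d^* ⊗ I_{2^3 M}. Then U = (W^† ⊗ I_{2^3 M}) · SEL · (W ⊗ I_{2^3 M}) is unitary and is an exact (1, 3 + ⌈log₂ D⌉, 0)-block encoding of L̃^{(D)}, with ancilla space ℂ^K ⊗ ℂ^{2^3}. -/
open Matrix

noncomputable section

/-- The index `N - 1` of the last grid point. -/
def fLast (N : ℕ) [NeZero N] : Fin N := ⟨N - 1, Nat.sub_lt (Nat.pos_of_neZero N) Nat.one_pos⟩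

/-- The scaled 1D Dirichlet Laplacian `L̃_d = L̃_p − (1/4)(e₀e_{N−1}ᵀ + e_{N−1}e₀ᵀ)`. -/
def Ldir (N : ℕ) [NeZero N] : Matrix (Fin N) (Fin N) ℂ :=
  Lper N - (1 / 4 : ℂ) •
    (Matrix.single (0 : Fin N) (fLast N) (1 : ℂ) +
     Matrix.single (fLast N) (0 : Fin N) (1 : ℂ))

/-- The scaled 1D Neumann Laplacian `L̃_n = L̃_d + (1/4)(e₀e₀ᵀ + e_{N−1}e_{N−1}ᵀ)`. -/
def Lneu (N : ℕ) [NeZero N] : Matrix (Fin N) (Fin N) ℂ :=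
  Ldir N + (1 / 4 : ℂ) •
    (Matrix.single (0 : Fin N) (0 : Fin N) (1 : ℂ) +
     Matrix.single (fLast N) (fLast N) (1 : ℂ))
open scoped Kronecker

/-- Boundary conditions for the discrete Laplacian. -/
inductive BC
  | periodic
  | dirichlet
  | neumann

/-- The scaled 1D Laplacian with the given boundary condition. -/
def Lbc (N : ℕ) [NeZero N] : BC → Matrix (Fin N) (Fin N) ℂ
  | .periodic => Lper N
  | .dirichlet => Ldir N
  | .neumann => Lneu N

/-- The factor `(I_{N_D} ⊗ ⋯ ⊗ I_{N_{d+1}}) ⊗ A ⊗ (I_{N_{d−1}} ⊗ ⋯ ⊗ I_{N_1})` of a Kronecker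
sum: the operator acting as `A` on the `d`-th coordinate of the grid and as the identity on all
other coordinates. -/
def dimOp {D : ℕ} (Nf : Fin D → ℕ) (d : Fin D)
    (A : Matrix (Fin (Nf d)) (Fin (Nf d)) ℂ) :
    Matrix ((k : Fin D) → Fin (Nf k)) ((k : Fin D) → Fin (Nf k)) ℂ :=
  Matrix.of fun x y => if ∀ k, k ≠ d → x k = y k then A (x d) (y d) else 0

/-- The select operator
`SEL = Σ_{d<D} f_d f_d^* ⊗ V_d + Σ_{D ≤ d < K} f_d f_d^* ⊗ I`. -/
def SEL {K : ℕ} {β : Type*} [Fintype β] [DecidableEq β] (D : ℕ) (hDK : D ≤ K)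
    (V : Fin D → Matrix β β ℂ) : Matrix (Fin K × β) (Fin K × β) ℂ :=
  (∑ d : Fin D,
      Matrix.single (Fin.castLE hDK d) (Fin.castLE hDK d) (1 : ℂ) ⊗ₖ V d) +
  ∑ k ∈ Finset.univ.filter fun k : Fin K => D ≤ (k : ℕ),
      Matrix.single k k (1 : ℂ) ⊗ₖ (1 : Matrix β β ℂ)

/-- `U = (W† ⊗ I) · SEL · (W ⊗ I)`. -/
def lcuU {K : ℕ} {β : Type*} [Fintype β] [DecidableEq β] (D : ℕ) (hDK : D ≤ K)
    (V : Fin D → Matrix β β ℂ) (W : Matrix (Fin K) (Fin K) ℂ) :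
    Matrix (Fin K × β) (Fin K × β) ℂ :=
  (Wᴴ ⊗ₖ (1 : Matrix β β ℂ)) * SEL D hDK V * (W ⊗ₖ (1 : Matrix β β ℂ))

/-!
`SEL = Σ_k f_k f_kᴴ ⊗ B_k` is block diagonal with unitary blocks (`B_k = V_k` for `k < D`, the
identity for the padding indices), hence unitary, and so is its conjugate `U` by the unitary
`W ⊗ I`. Since `W f_1 = Σ_d √ω_d f_d`, the `(f_1, f_1)` block of `U` is
`Σ_k |W_{k1}|² B_k = Σ_d ω_d V_d`, whose top-left block is `Σ_d ω_d (I ⊗ L̃_{b_d} ⊗ I)`.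
-/
namespace Matrix

theorem sum_kronecker {ι l m n p α : Type*} [NonUnitalNonAssocSemiring α] (s : Finset ι)
    (A : ι → Matrix l m α) (B : Matrix n p α) :
    (∑ k ∈ s, A k) ⊗ₖ B = ∑ k ∈ s, A k ⊗ₖ B := by
  ext
  simp only [kroneckerMap_apply, sum_apply, Finset.sum_mul]

variable {ι β α : Type*} [Fintype ι] [DecidableEq ι] [Fintype β] [DecidableEq β]
  [CommRing α] [StarRing α]

theorem kronecker_one_mem_unitaryGroup {W : Matrix ι ι α} (hW : W ∈ unitaryGroup ι α) :
    W ⊗ₖ (1 : Matrix β β α) ∈ unitaryGroup (ι × β) α := by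
  rw [mem_unitaryGroup_iff, star_eq_conjTranspose, conjTranspose_kronecker, conjTranspose_one,
    ← mul_kronecker_mul, ← star_eq_conjTranspose, mem_unitaryGroup_iff.mp hW, one_mul,
    one_kronecker_one]

theorem sum_single_kronecker_mem_unitaryGroup {B : ι → Matrix β β α}
    (hB : ∀ k, B k ∈ unitaryGroup β α) :
    ∑ k, single k k (1 : α) ⊗ₖ B k ∈ unitaryGroup (ι × β) α := by
  rw [mem_unitaryGroup_iff, star_eq_conjTranspose, conjTranspose_sum, Finset.sum_mul_sum]
  calc ∑ k, ∑ l, (single k k (1 : α) ⊗ₖ B k) * (single l l 1 ⊗ₖ B l)ᴴ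
      = ∑ k, single k k (1 : α) ⊗ₖ 1 := by
        refine Finset.sum_congr rfl fun k _ => ?_
        rw [Finset.sum_eq_single k (fun l _ hlk => by
          rw [conjTranspose_kronecker, ← mul_kronecker_mul, conjTranspose_single,
            single_mul_single_of_ne (h := hlk.symm), zero_kronecker])
          (fun h => absurd (Finset.mem_univ k) h)]
        rw [conjTranspose_kronecker, ← mul_kronecker_mul, conjTranspose_single,
          single_mul_single_same, ← star_eq_conjTranspose, mem_unitaryGroup_iff.mp (hB k),
          star_one, mul_one]
    _ = 1 := by rw [← sum_kronecker, sum_single_one, one_kronecker_one]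

theorem conjTranspose_kronecker_one_mul_sum_single_kronecker_mul_apply
    (W : Matrix ι ι α) (B : ι → Matrix β β α) (i j : ι) (x y : β) :
    ((Wᴴ ⊗ₖ (1 : Matrix β β α)) * (∑ k, single k k (1 : α) ⊗ₖ B k) * (W ⊗ₖ 1) :
      Matrix (ι × β) (ι × β) α) (i, x) (j, y) =
      ∑ k, star (W k i) * W k j * B k x y := by
  rw [Finset.mul_sum, Finset.sum_mul, sum_apply]
  refine Finset.sum_congr rfl fun k _ => ?_
  rw [← mul_kronecker_mul, ← mul_kronecker_mul, one_mul, mul_one, kroneckerMap_apply]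
  simp [mul_apply, single_apply, ite_and, mul_ite, ite_mul]

end Matrix

theorem Fin.sum_dite_val_lt {M : Type*} [AddCommMonoid M] {D K : ℕ} (hDK : D ≤ K)
    (g : Fin D → M) :
    (∑ k : Fin K, if hk : (k : ℕ) < D then g ⟨k, hk⟩ else 0) = ∑ d : Fin D, g d := by
  rw [Fin.sum_univ_eq_sum_range (fun i => if hi : i < D then g ⟨i, hi⟩ else 0) K,
    ← Finset.sum_subset (Finset.range_subset_range.mpr hDK)
      (fun i _ hi => dif_neg (by simpa using hi)),
    ← Fin.sum_univ_eq_sum_range (fun i => if hi : i < D then g ⟨i, hi⟩ else 0) D]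
  exact Finset.sum_congr rfl fun d _ => dif_pos d.isLt

section SEL

variable {K : ℕ} {β : Type*} [Fintype β] [DecidableEq β]

def selBlock (D : ℕ) (V : Fin D → Matrix β β ℂ) (k : Fin K) : Matrix β β ℂ :=
  if hk : (k : ℕ) < D then V ⟨k, hk⟩ else 1

theorem SEL_eq_sum_single_kronecker (D : ℕ) (hDK : D ≤ K) (V : Fin D → Matrix β β ℂ) :
    SEL D hDK V = ∑ k, Matrix.single k k (1 : ℂ) ⊗ₖ selBlock D V k := by
  have hsplit : ∀ k : Fin K, Matrix.single k k (1 : ℂ) ⊗ₖ selBlock D V k =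
      (if hk : (k : ℕ) < D then
        Matrix.single (Fin.castLE hDK ⟨k, hk⟩) (Fin.castLE hDK ⟨k, hk⟩) (1 : ℂ) ⊗ₖ V ⟨k, hk⟩
      else 0) +
      (if D ≤ (k : ℕ) then Matrix.single k k (1 : ℂ) ⊗ₖ (1 : Matrix β β ℂ) else 0) := by
    intro k
    unfold selBlock
    split_ifs <;> first | omega | simp
  rw [Finset.sum_congr rfl fun k _ => hsplit k, Finset.sum_add_distrib,
    Fin.sum_dite_val_lt hDK fun d => Matrix.single (Fin.castLE hDK d) (Fin.castLE hDK d) 1 ⊗ₖ V d,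
    ← Finset.sum_filter, SEL]

theorem SEL_mem_unitaryGroup (D : ℕ) (hDK : D ≤ K) {V : Fin D → Matrix β β ℂ}
    (hV : ∀ d, V d ∈ Matrix.unitaryGroup β ℂ) :
    SEL D hDK V ∈ Matrix.unitaryGroup (Fin K × β) ℂ := by
  rw [SEL_eq_sum_single_kronecker]
  refine Matrix.sum_single_kronecker_mem_unitaryGroup fun k => ?_
  unfold selBlock
  split_ifs
  exacts [hV _, one_mem _]

theorem lcuU_mem_unitaryGroup (D : ℕ) (hDK : D ≤ K) {V : Fin D → Matrix β β ℂ}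
    (hV : ∀ d, V d ∈ Matrix.unitaryGroup β ℂ) {W : Matrix (Fin K) (Fin K) ℂ}
    (hW : W ∈ Matrix.unitaryGroup (Fin K) ℂ) :
    lcuU D hDK V W ∈ Matrix.unitaryGroup (Fin K × β) ℂ :=
  mul_mem (mul_mem (Matrix.kronecker_one_mem_unitaryGroup (Unitary.star_mem hW))
    (SEL_mem_unitaryGroup D hDK hV)) (Matrix.kronecker_one_mem_unitaryGroup hW)

theorem lcuU_apply (D : ℕ) (hDK : D ≤ K) (V : Fin D → Matrix β β ℂ)
    (W : Matrix (Fin K) (Fin K) ℂ) (i j : Fin K) (x y : β) :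
    lcuU D hDK V W (i, x) (j, y) = ∑ k, star (W k i) * W k j * selBlock D V k x y := by
  rw [lcuU, SEL_eq_sum_single_kronecker,
    Matrix.conjTranspose_kronecker_one_mul_sum_single_kronecker_mul_apply]

end SEL

theorem ddim_laplacian_block_encoding_general (D : ℕ)
    (nd : Fin D → ℕ)
    (h : Fin D → ℝ)
    (b : Fin D → BC)
    (ω : Fin D → ℝ) (hω : ∀ d, ω d = (1 / (h d) ^ 2) / ∑ i, 1 / (h i) ^ 2)
    (V : Fin D →
      Matrix (Fin (2 ^ 3) × ((k : Fin D) → Fin (2 ^ nd k)))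
        (Fin (2 ^ 3) × ((k : Fin D) → Fin (2 ^ nd k))) ℂ)
    (hVU : ∀ d, V d ∈
      Matrix.unitaryGroup (Fin (2 ^ 3) × ((k : Fin D) → Fin (2 ^ nd k))) ℂ)
    (hVbe : ∀ d, (V d).submatrix
        (fun x : (k : Fin D) → Fin (2 ^ nd k) => ((0 : Fin (2 ^ 3)), x))
        (fun y : (k : Fin D) → Fin (2 ^ nd k) => ((0 : Fin (2 ^ 3)), y))
      = dimOp (fun k => 2 ^ nd k) d (Lbc (2 ^ nd d) (b d)))
    (W : Matrix (Fin (2 ^ Nat.clog 2 D)) (Fin (2 ^ Nat.clog 2 D)) ℂ)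
    (hWU : W ∈ Matrix.unitaryGroup (Fin (2 ^ Nat.clog 2 D)) ℂ)
    (hW : W.mulVec (Pi.single (0 : Fin (2 ^ Nat.clog 2 D)) 1) =
      fun k : Fin (2 ^ Nat.clog 2 D) =>
        if hk : (k : ℕ) < D then ((Real.sqrt (ω ⟨k, hk⟩) : ℝ) : ℂ) else 0) :
    lcuU D (Nat.le_pow_clog one_lt_two D) V W ∈
      Matrix.unitaryGroup
        (Fin (2 ^ Nat.clog 2 D) × Fin (2 ^ 3) × ((k : Fin D) → Fin (2 ^ nd k))) ℂ ∧
    (lcuU D (Nat.le_pow_clog one_lt_two D) V W).submatrix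
        (fun x : (k : Fin D) → Fin (2 ^ nd k) =>
          ((0 : Fin (2 ^ Nat.clog 2 D)), (0 : Fin (2 ^ 3)), x))
        (fun y : (k : Fin D) → Fin (2 ^ nd k) =>
          ((0 : Fin (2 ^ Nat.clog 2 D)), (0 : Fin (2 ^ 3)), y))
      = ∑ d, ((ω d : ℂ) • dimOp (fun k => 2 ^ nd k) d (Lbc (2 ^ nd d) (b d))) := by
  refine ⟨lcuU_mem_unitaryGroup _ _ hVU hWU, ?_⟩
  have hω_nonneg : ∀ d, 0 ≤ ω d := fun d => by
    rw [hω d]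
    exact div_nonneg (by positivity) (Finset.sum_nonneg fun i _ => by positivity)
  have hW_col : ∀ k, W k 0 = if hk : (k : ℕ) < D then ((√(ω ⟨k, hk⟩) : ℝ) : ℂ) else 0 := by
    intro k
    simpa [Matrix.mulVec_single] using congrFun hW k
  ext x y
  rw [Matrix.submatrix_apply, lcuU_apply, Matrix.sum_apply, ← Fin.sum_dite_val_lt
    (Nat.le_pow_clog one_lt_two D)]
  refine Finset.sum_congr rfl fun k _ => ?_
  rw [hW_col]
  split_ifs with hk
  · rw [selBlock, dif_pos hk, ← Matrix.submatrix_apply (V _), hVbe, Matrix.smul_apply,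
      smul_eq_mul, Complex.star_def, Complex.conj_ofReal, ← Complex.ofReal_mul,
      Real.mul_self_sqrt (hω_nonneg _)]
  · simp

/-- Block encoding of the scaled `D`-dimensional Laplacian
`L̃^{(D)} = Σ_d ω_d · (I ⊗ ⋯ ⊗ L̃^{(N_d)}_{b_d} ⊗ ⋯ ⊗ I)` from `(1,3,0)`-block encodings `V_d` of
the one-dimensional factors: `U = (W† ⊗ I) · SEL · (W ⊗ I)` is unitary and is an exact
`(1, 3 + ⌈log₂ D⌉, 0)`-block encoding of `L̃^{(D)}`. -/
theorem ddim_laplacian_block_encoding (D : ℕ) (hD : 1 ≤ D)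
    (nd : Fin D → ℕ) (hnd : ∀ d, 1 ≤ nd d)
    (h : Fin D → ℝ) (hh : ∀ d, 0 < h d)
    (b : Fin D → BC)
    (ω : Fin D → ℝ) (hω : ∀ d, ω d = (1 / (h d) ^ 2) / ∑ i, 1 / (h i) ^ 2)
    (V : Fin D →
      Matrix (Fin (2 ^ 3) × ((k : Fin D) → Fin (2 ^ nd k)))
        (Fin (2 ^ 3) × ((k : Fin D) → Fin (2 ^ nd k))) ℂ)
    (hVU : ∀ d, V d ∈
      Matrix.unitaryGroup (Fin (2 ^ 3) × ((k : Fin D) → Fin (2 ^ nd k))) ℂ)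
    (hVbe : ∀ d, (V d).submatrix
        (fun x : (k : Fin D) → Fin (2 ^ nd k) => ((0 : Fin (2 ^ 3)), x))
        (fun y : (k : Fin D) → Fin (2 ^ nd k) => ((0 : Fin (2 ^ 3)), y))
      = dimOp (fun k => 2 ^ nd k) d (Lbc (2 ^ nd d) (b d)))
    (W : Matrix (Fin (2 ^ Nat.clog 2 D)) (Fin (2 ^ Nat.clog 2 D)) ℂ)
    (hWU : W ∈ Matrix.unitaryGroup (Fin (2 ^ Nat.clog 2 D)) ℂ)
    (hW : W.mulVec (Pi.single (0 : Fin (2 ^ Nat.clog 2 D)) 1) =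
      fun k : Fin (2 ^ Nat.clog 2 D) =>
        if hk : (k : ℕ) < D then ((Real.sqrt (ω ⟨k, hk⟩) : ℝ) : ℂ) else 0) :
    lcuU D (Nat.le_pow_clog one_lt_two D) V W ∈
      Matrix.unitaryGroup
        (Fin (2 ^ Nat.clog 2 D) × Fin (2 ^ 3) × ((k : Fin D) → Fin (2 ^ nd k))) ℂ ∧
    (lcuU D (Nat.le_pow_clog one_lt_two D) V W).submatrix
        (fun x : (k : Fin D) → Fin (2 ^ nd k) =>
          ((0 : Fin (2 ^ Nat.clog 2 D)), (0 : Fin (2 ^ 3)), x))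
        (fun y : (k : Fin D) → Fin (2 ^ nd k) =>
          ((0 : Fin (2 ^ Nat.clog 2 D)), (0 : Fin (2 ^ 3)), y))
      = ∑ d, ((ω d : ℂ) • dimOp (fun k => 2 ^ nd k) d (Lbc (2 ^ nd d) (b d))) :=
  ddim_laplacian_block_encoding_general D nd h b ω hω V hVU hVbe W hWU hW
end
end
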